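/- Let L be as in the five-point symmetrized scheme with positive weights M_{ij} on a finite periodic grid, and suppose (I − Δt L)h = f with f_{ij} ≥ 0 for all (i,j) and Δt > 0. Then h_{ij} ≥ 0 for all (i,j). -/
import Mathlib


/-- The five-point symmetrized operator on the periodic grid
`(ZMod n) × (ZMod n)` (case `Δx = Δy`). -/
noncomputable def fivePoint (n : ℕ) [NeZero n] (Δx : ℝ)
    (M h : ZMod n × ZMod n → ℝ) (p : ZMod n × ZMod n) : ℝ :=
  (1 / Δx ^ 2) *
    (h (p - (1, 0)) + h (p + (1, 0)) + h (p - (0, 1)) + h (p + (0, 1))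
      - ((Real.sqrt (M (p - (1, 0))) + Real.sqrt (M (p + (1, 0)))
          + Real.sqrt (M (p - (0, 1))) + Real.sqrt (M (p + (0, 1))))
            / Real.sqrt (M p)) * h p)

/-- Positivity preservation of the fully discrete scheme:
if `(I - Δt L) h = f` with `f ≥ 0`, then `h ≥ 0`. -/
theorem five_point_positivity (n : ℕ) [NeZero n] (Δt Δx : ℝ)
    (hΔt : 0 < Δt) (hΔx : 0 < Δx) (M : ZMod n × ZMod n → ℝ)
    (hM : ∀ p, 0 < M p) (h f : ZMod n × ZMod n → ℝ)
    (hf : ∀ p, 0 ≤ f p)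
    (heq : ∀ p, h p - Δt * fivePoint n Δx M h p = f p) :
    ∀ p, 0 ≤ h p := by
  have hMs : ∀ p, 0 < Real.sqrt (M p) := fun p => Real.sqrt_pos.mpr (hM p)
  obtain ⟨p0, hp0⟩ := Finite.exists_min (fun p => h p / Real.sqrt (M p))

  have hnb : ∀ q, Real.sqrt (M q) * (h p0 / Real.sqrt (M p0)) ≤ h q := by
    intro q
    calc Real.sqrt (M q) * (h p0 / Real.sqrt (M p0))
        ≤ Real.sqrt (M q) * (h q / Real.sqrt (M q)) :=
          mul_le_mul_of_nonneg_left (hp0 q) (hMs q).le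
      _ = h q := by rw [mul_comm, div_mul_cancel₀ _ (hMs q).ne']
  have key : 0 ≤ h p0 := by
    have e := heq p0
    unfold fivePoint at e
    have hW : ((Real.sqrt (M (p0 - (1, 0))) + Real.sqrt (M (p0 + (1, 0)))
          + Real.sqrt (M (p0 - (0, 1))) + Real.sqrt (M (p0 + (0, 1))))
            / Real.sqrt (M p0)) * h p0
        = Real.sqrt (M (p0 - (1, 0))) * (h p0 / Real.sqrt (M p0))
          + Real.sqrt (M (p0 + (1, 0))) * (h p0 / Real.sqrt (M p0))
          + Real.sqrt (M (p0 - (0, 1))) * (h p0 / Real.sqrt (M p0))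
          + Real.sqrt (M (p0 + (0, 1))) * (h p0 / Real.sqrt (M p0)) := by ring
    rw [hW] at e
    have h1 := hnb (p0 - (1, 0))
    have h2 := hnb (p0 + (1, 0))
    have h3 := hnb (p0 - (0, 1))
    have h4 := hnb (p0 + (0, 1))
    have hfc := hf p0
    have hc : (0:ℝ) ≤ Δt * (1 / Δx ^ 2) := by positivity
    nlinarith [mul_nonneg hc (by linarith :
        (0:ℝ) ≤ h (p0 - (1, 0)) + h (p0 + (1, 0)) + h (p0 - (0, 1)) + h (p0 + (0, 1))
          - (Real.sqrt (M (p0 - (1, 0))) * (h p0 / Real.sqrt (M p0))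
            + Real.sqrt (M (p0 + (1, 0))) * (h p0 / Real.sqrt (M p0))
            + Real.sqrt (M (p0 - (0, 1))) * (h p0 / Real.sqrt (M p0))
            + Real.sqrt (M (p0 + (0, 1))) * (h p0 / Real.sqrt (M p0))))]
  intro p
  have hg0 : 0 ≤ h p0 / Real.sqrt (M p0) := div_nonneg key (hMs p0).le
  have := (hp0 p)
  have hpd : 0 ≤ h p / Real.sqrt (M p) := le_trans hg0 this
  have := (le_div_iff₀ (hMs p)).mp hpd
  simpa using this
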